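/- Let a, b, c > 0. For every Q ∈ S₀ with |Q| > 1 one has f*(Q) > f*(Q/|Q|). -/

import Mathlib

open Matrix

noncomputable section

abbrev M3 : Type := Matrix (Fin 3) (Fin 3) ℝ

def frob (Q : M3) : ℝ := Real.sqrt (∑ i, ∑ j, (Q i j) ^ 2)

/-- s_* = (b + √(b² + 24ac))/(4c). -/
def sstar (a b c : ℝ) : ℝ := (b + Real.sqrt (b ^ 2 + 24 * a * c)) / (4 * c)

def bstar (a b c : ℝ) : ℝ := Real.sqrt (2/3) * sstar a b c * b

def cstar (a b c : ℝ) : ℝ := (2/3) * (sstar a b c) ^ 2 * c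

def kstar (a b c : ℝ) : ℝ := a/2 + sstar a b c * b/9 - (sstar a b c) ^ 2 * c/6

/-- The rescaled Landau-de Gennes bulk potential
f*(Q) = k* − (a/2)tr Q² − (b*/3)tr Q³ + (c*/4)(tr Q²)². -/
def fstar (a b c : ℝ) (Q : M3) : ℝ :=
  kstar a b c - (a/2) * (Q * Q).trace - (bstar a b c / 3) * (Q * Q * Q).trace
    + (cstar a b c / 4) * ((Q * Q).trace) ^ 2

/-!
Write `Q = t • P` with `t = |Q|` and `|P| = 1`. Along this ray, `f*(t • P) - f*(P)` is a
polynomial in `t` with coefficients `-a/2`, `-(b*/3) tr P³`, `c*/4`. The cubic coefficient is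
controlled by the sharp inequality `6 (tr P³)² ≤ (tr P²)³` for traceless symmetric `P`, which
comes from the eigenvalues, and the quadratic equation `2 c s*² = b s* + 3 a` defining `s*` makes
the quartic term dominate for `t > 1`.
-/

theorem Matrix.IsHermitian.trace_pow_eq_sum_eigenvalues {𝕜 n : Type*} [RCLike 𝕜] [Fintype n]
    [DecidableEq n] {A : Matrix n n 𝕜} (hA : A.IsHermitian) (k : ℕ) :
    (A ^ k).trace = ∑ i, ((hA.eigenvalues i ^ k : ℝ) : 𝕜) := by
  conv_lhs => rw [hA.spectral_theorem, ← map_pow, Unitary.conjStarAlgAut_apply, trace_mul_cycle,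
    Unitary.coe_star_mul_self, one_mul, diagonal_pow, trace_diagonal]
  simp

theorem six_mul_sum_cube_sq_le (x y z : ℝ) (h : x + y + z = 0) :
    6 * (x ^ 3 + y ^ 3 + z ^ 3) ^ 2 ≤ (x ^ 2 + y ^ 2 + z ^ 2) ^ 3 := by
  obtain rfl : z = -(x + y) := by linarith
  -- `(x² + y² + z²)³ - 6 (x³ + y³ + z³)² = 2 ((x - y) (2x + y) (x + 2y))²`
  linear_combination 2 * sq_nonneg ((x - y) * (2 * x + y) * (x + 2 * y))

theorem Matrix.IsSymm.six_mul_trace_cube_sq_le {Q : Matrix (Fin 3) (Fin 3) ℝ} (hQ : Q.IsSymm)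
    (htr : Q.trace = 0) : 6 * (Q * Q * Q).trace ^ 2 ≤ (Q * Q).trace ^ 3 := by
  have hH : Q.IsHermitian := (conjTranspose_eq_transpose_of_trivial Q).trans hQ
  have htrace (k : ℕ) := hH.trace_pow_eq_sum_eigenvalues k
  simp only [RCLike.ofReal_real_eq_id, id, Fin.sum_univ_three] at htrace
  rw [← sq, ← pow_succ, htrace 2, htrace 3]
  exact six_mul_sum_cube_sq_le _ _ _ (by simpa [htr] using (htrace 1).symm)

theorem frob_sq_eq_trace_transpose_mul (Q : M3) : frob Q ^ 2 = (Qᵀ * Q).trace := by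
  rw [frob, Real.sq_sqrt (by positivity), Finset.sum_comm]
  simp [trace, mul_apply, sq]

section SmulTrace

variable {n R : Type*} [Fintype n] [CommRing R]

theorem trace_smul_mul_smul (t : R) (P : Matrix n n R) :
    ((t • P) * (t • P)).trace = t ^ 2 * (P * P).trace := by
  simp only [Matrix.smul_mul, Matrix.mul_smul, smul_smul, trace_smul, smul_eq_mul]
  ring

theorem trace_smul_mul_smul_mul_smul (t : R) (P : Matrix n n R) :
    ((t • P) * (t • P) * (t • P)).trace = t ^ 3 * (P * P * P).trace := by
  simp only [Matrix.smul_mul, Matrix.mul_smul, smul_smul, trace_smul, smul_eq_mul]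
  ring

end SmulTrace

theorem sstar_pos {a c : ℝ} (b : ℝ) (ha : 0 < a) (hc : 0 < c) : 0 < sstar a b c := by
  have hb : |b| < Real.sqrt (b ^ 2 + 24 * a * c) := by
    rw [← Real.sqrt_sq_eq_abs]
    exact Real.sqrt_lt_sqrt (sq_nonneg b) (by linarith [mul_pos ha hc])
  unfold sstar
  exact div_pos (by linarith [neg_abs_le b]) (by positivity)

theorem sstar_quadratic {a b c : ℝ} (hc : c ≠ 0) (hd : 0 ≤ b ^ 2 + 24 * a * c) :
    2 * c * sstar a b c ^ 2 = b * sstar a b c + 3 * a := by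
  have hr := Real.sq_sqrt hd
  unfold sstar
  generalize Real.sqrt (b ^ 2 + 24 * a * c) = r at hr ⊢
  field_simp
  linear_combination 2 * hr

theorem quadratic_add_cubic_lt_quartic {a b c s t : ℝ} (ha : 0 < a) (hb : 0 < b) (hs : 0 < s)
    (hquad : 2 * c * s ^ 2 = b * s + 3 * a) (ht : 1 < t) :
    a / 2 * (t ^ 2 - 1) + s * b / 9 * (t ^ 3 - 1) < c * s ^ 2 / 6 * (t ^ 4 - 1) := by
  have hbs : b ≤ 2 * c * s := by nlinarith
  -- After eliminating `a`, the gap is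
  -- `(2cs - b) s (t² - 1)² / 12 + b s (t - 1)² (3t² + 2t + 1) / 36`.
  have h₁ : 0 ≤ (2 * c * s - b) * (s * (t ^ 2 - 1) ^ 2) :=
    mul_nonneg (by linarith) (by positivity)
  have h₂ : 0 < b * s * ((t - 1) ^ 2 * (3 * t ^ 2 + 2 * t + 1)) :=
    mul_pos (mul_pos hb hs) (mul_pos (pow_pos (by linarith) 2) (by nlinarith))
  linear_combination h₁ / 12 + h₂ / 36 - (t ^ 2 - 1) / 6 * hquad

theorem fstar_lt_fstar_smul {a b c : ℝ} (ha : 0 < a) (hb : 0 < b) (hc : 0 < c) {P : M3}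
    (hP2 : (P * P).trace = 1) (hP3 : 6 * (P * P * P).trace ^ 2 ≤ 1) {t : ℝ} (ht : 1 < t) :
    fstar a b c P < fstar a b c (t • P) := by
  set s := sstar a b c
  have hs : 0 < s := sstar_pos b ha hc
  have hcubic : bstar a b c * (P * P * P).trace ≤ s * b / 3 := by
    have h : Real.sqrt (2 / 3) * (P * P * P).trace ≤ 1 / 3 :=
      le_of_sq_le_sq (by rw [mul_pow, Real.sq_sqrt (by norm_num)]; linarith) (by norm_num)
    calc bstar a b c * (P * P * P).trace = s * b * (Real.sqrt (2 / 3) * (P * P * P).trace) := by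
          rw [bstar]; ring
      _ ≤ s * b * (1 / 3) := mul_le_mul_of_nonneg_left h (by positivity)
      _ = s * b / 3 := by ring
  have hquartic := quadratic_add_cubic_lt_quartic ha hb hs
    (sstar_quadratic hc.ne' (by positivity)) ht
  have ht3 : 0 ≤ t ^ 3 - 1 := by nlinarith
  simp only [fstar, trace_smul_mul_smul, trace_smul_mul_smul_mul_smul, hP2, cstar]
  linear_combination hquartic + mul_le_mul_of_nonneg_right hcubic ht3 / 3

/-- For every Q ∈ S₀ with |Q| > 1 one has f*(Q) > f*(Q/|Q|). -/
theorem stmt5 (a b c : ℝ) (ha : 0 < a) (hb : 0 < b) (hc : 0 < c)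
    (Q : M3) (hsymm : Qᵀ = Q) (htr : Q.trace = 0) (hQ : 1 < frob Q) :
    fstar a b c ((frob Q)⁻¹ • Q) < fstar a b c Q := by
  set t := frob Q
  have ht : t ≠ 0 := (zero_lt_one.trans hQ).ne'
  set P := t⁻¹ • Q
  have hQP : Q = t • P := by simp [P, smul_smul, ht]
  have hP2 : (P * P).trace = 1 := by
    rw [trace_smul_mul_smul]
    nth_rw 1 [← hsymm]
    rw [← frob_sq_eq_trace_transpose_mul, inv_pow,
      inv_mul_cancel₀ (pow_ne_zero 2 ht)]
  have hP3 : 6 * (P * P * P).trace ^ 2 ≤ 1 := by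
    have h := IsSymm.six_mul_trace_cube_sq_le (Q := P) (IsSymm.smul hsymm t⁻¹)
      (by rw [trace_smul, htr, smul_zero])
    rwa [hP2, one_pow] at h
  conv_rhs => rw [hQP]
  exact fstar_lt_fstar_smul ha hb hc hP2 hP3 hQ
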